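/- Let r_1,…,r_k, n be positive integers, r = r_1⋯r_k, and K(q) = ∑_{m=1}^k r_{m+1}⋯r_k · ∑_{t=1}^{r_m−1} q^{t·r/r_m}. Then ∑_{π ∈ G} q^{exc(π)} (−1)^{cyc(π)} = −(1 + K(q))·(q^r − 1)^{n−1}, where G = (Z_{r_1} × ⋯ × Z_{r_k}) ≀ S_n. -/

import Mathlib

open Finset Polynomial

/-- A color vector for the group `ℤ_{r 0} × ⋯ × ℤ_{r (k-1)}`. -/
abbrev Color (k : ℕ) (r : Fin k → ℕ) := ∀ j : Fin k, ZMod (r j)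

/-- An element of the wreath product `(ℤ_{r 0} × ⋯ × ℤ_{r (k-1)}) ≀ S_n`:
a color vector for each digit together with an underlying permutation. -/
abbrev GElt (k n : ℕ) (r : Fin k → ℕ) := (Fin n → Color k r) × Equiv.Perm (Fin n)

/-- `r = r_1 ⋯ r_k`. -/
def totR (k : ℕ) (r : Fin k → ℕ) : ℕ := ∏ j, r j

/-- `csum_p(π) = ∑_i z_i^p · ∏_{t<p} χ(z_i^t = 0)`, colors as representatives. -/
def csump {k n : ℕ} (r : Fin k → ℕ) (Z : Fin n → Color k r) (p : Fin k) : ℕ :=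
  ∑ i, (Z i p).val * ∏ t ∈ Finset.Iio p, if (Z i t).val = 0 then 1 else 0

/-- `csum(π) = ∑_p csum_p(π) · ∏_{q ≠ p} r_q`. -/
def csum {k n : ℕ} (r : Fin k → ℕ) (Z : Fin n → Color k r) : ℕ :=
  ∑ p, csump r Z p * ∏ q ∈ Finset.univ.erase p, r q

/-- `exc_A(π)`: number of `i` with zero color vector and `σ(i) > i`. -/
def excA {k n : ℕ} (r : Fin k → ℕ) (π : GElt k n r) : ℕ :=
  (Finset.univ.filter fun i => (∀ j, (π.1 i j).val = 0) ∧ i < π.2 i).card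

/-- `exc(π) = r·exc_A(π) + ∑_p csum_p(π)·∏_{q≠p} r_q`. -/
def exc {k n : ℕ} (r : Fin k → ℕ) (π : GElt k n r) : ℕ :=
  totR k r * excA r π + csum r π.1

/-- Number of cycles of a permutation, counting fixed points as 1-cycles. -/
def cyc {n : ℕ} (σ : Equiv.Perm (Fin n)) : ℕ :=
  (Finset.univ.filter fun i => σ i = i).card + σ.cycleType.card

/-- `K(q) = ∑_{m=1}^k r_{m+1}⋯r_k ∑_{t=1}^{r_m−1} q^{t·r/r_m}`. -/
noncomputable def Kpoly (k : ℕ) (r : Fin k → ℕ) : Polynomial ℚ :=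
  ∑ m : Fin k, ((∏ j ∈ Finset.Ioi m, r j : ℕ) : Polynomial ℚ) *
    ∑ t ∈ Finset.Ico 1 (r m), X ^ (t * ∏ q ∈ Finset.univ.erase m, r q)

/-- The signed excedance generating function `∑_π q^{exc(π)} (−1)^{cyc(π)}`. -/
noncomputable def Pgen (k : ℕ) (r : Fin k → ℕ) [∀ j, NeZero (r j)] (n : ℕ) : Polynomial ℚ :=
  ∑ π : GElt k n r, (-1) ^ (cyc π.2) * X ^ (exc r π)

/-- The signed excedance generating function over derangements. -/
noncomputable def Qgen (k : ℕ) (r : Fin k → ℕ) [∀ j, NeZero (r j)] (n : ℕ) : Polynomial ℚ :=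
  ∑ π ∈ Finset.univ.filter (fun π : GElt k n r => ∀ i, π.2 i ≠ i),
    (-1) ^ (cyc π.2) * X ^ (exc r π)

/-- Wreath product multiplication `(Z,τ)·(U,σ) = ((z_i + u_{τ⁻¹(i)}), τ∘σ)`. -/
def wmul {k n : ℕ} {r : Fin k → ℕ} (p q : GElt k n r) : GElt k n r :=
  (fun i => p.1 i + q.1 (p.2⁻¹ i), p.2 * q.2)

/-- The identity of the wreath product. -/
def wone {k n : ℕ} {r : Fin k → ℕ} : GElt k n r := (fun _ => 0, 1)

/-- Number of absolute fixed points. -/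
def fixn {n : ℕ} (σ : Equiv.Perm (Fin n)) : ℕ :=
  (Finset.univ.filter fun i => σ i = i).card

/-- `ε`: the number of even `r_i`. -/
def epsn (k : ℕ) (r : Fin k → ℕ) : ℕ := (Finset.univ.filter fun i => 2 ∣ r i).card

/-- `f_n(u,v,w) = ∑_{π involution} u^{fix(π)} v^{exc_A(π)} w^{csum(π)}`,
with `u = X 0`, `v = X 1`, `w = X 2`. -/
noncomputable def fgen (k : ℕ) (r : Fin k → ℕ) [∀ j, NeZero (r j)] (n : ℕ) :
    MvPolynomial (Fin 3) ℚ :=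
  ∑ π ∈ Finset.univ.filter (fun π : GElt k n r => wmul π π = wone),
    (MvPolynomial.X 0) ^ (fixn π.2) * (MvPolynomial.X 1) ^ (excA r π) *
      (MvPolynomial.X 2) ^ (csum r π.1)

/-- `μ = 1` if `r` is odd, `μ = 1 + 2^ε w^{r/2}` if `r` is even. -/
noncomputable def muP (k : ℕ) (r : Fin k → ℕ) : MvPolynomial (Fin 3) ℚ :=
  if 2 ∣ totR k r then 1 + (2 ^ (epsn k r) : MvPolynomial (Fin 3) ℚ) *
    (MvPolynomial.X 2) ^ (totR k r / 2) else 1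

/-!
Summing over the colours first, `q ^ exc` factors over the positions: position `i` contributes
`q ^ r + K(q)` if `σ i > i` and `1 + K(q)` otherwise. Indeed only the zero colour vector sees the
excedance, and a colour vector whose first nonzero coordinate is `m` contributes
`q ^ (z_m · r / r_m)` while its coordinates after `m` are free, which is where `K` comes from.
Since `(-1) ^ cyc σ = (-1) ^ n · sign σ`, the remaining sum over `S_n` is `(-1) ^ n` times the
determinant of the matrix with `a = q ^ r + K` strictly below the diagonal and `b = 1 + K`
elsewhere; subtracting the second row from the first and expanding along it gives
`det = (b - a) ^ (n - 1) · b` by induction.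
-/

section Determinant

variable {R : Type*} [CommRing R]

theorem Matrix.det_of_ite_lt (m : ℕ) (a b : R) :
    (Matrix.of fun i j : Fin (m + 1) => if j < i then a else b).det = (b - a) ^ m * b := by
  induction m with
  | zero => simp
  | succ m ih =>
    set M : Matrix (Fin (m + 2)) (Fin (m + 2)) R := Matrix.of fun i j => if j < i then a else b
    have hrow : M 0 + (-1 : R) • M 1 = Pi.single 0 (b - a) := by
      ext j
      rcases Fin.eq_zero_or_eq_succ j with rfl | ⟨j, rfl⟩
      · simp [M, sub_eq_neg_add, add_comm]
      · simp [M, Fin.succ_ne_zero, Fin.lt_one_iff]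
    rw [← M.det_updateRow_add_smul_self Fin.zero_ne_one, hrow, Matrix.det_succ_row_zero,
      Fin.sum_univ_succ]
    simp only [Matrix.updateRow_self, Pi.single_eq_same, Pi.single_eq_of_ne (Fin.succ_ne_zero _),
      mul_zero, zero_mul, sum_const_zero, add_zero, Fin.val_zero, pow_zero, one_mul,
      Fin.succAbove_zero]
    have hminor : (M.updateRow 0 (Pi.single 0 (b - a))).submatrix Fin.succ Fin.succ =
        Matrix.of fun i j : Fin (m + 1) => if j < i then a else b := by
      ext i j
      simp [M, Fin.succ_lt_succ_iff]
    rw [hminor, ih, pow_succ]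
    ring

theorem neg_one_pow_cyc {n : ℕ} (σ : Equiv.Perm (Fin n)) :
    (-1 : R) ^ cyc σ = (-1) ^ n * (Equiv.Perm.sign σ : R) := by
  have hcard : (-1 : R) ^ n = (-1) ^ (#{i | σ i = i} + σ.cycleType.sum) := by
    rw [Equiv.Perm.sum_cycleType, Equiv.Perm.support, card_filter_add_card_filter_not,
      card_univ, Fintype.card_fin]
  rw [hcard, Equiv.Perm.sign_of_cycleType, cyc]
  set f := #{i | σ i = i}
  set s := σ.cycleType.sum
  push_cast
  rw [← pow_add, show f + s + (s + σ.cycleType.card) = f + σ.cycleType.card + 2 * s by ring,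
    pow_add _ _ (2 * s), pow_mul, neg_one_sq, one_pow, mul_one]

theorem sum_neg_one_pow_cyc_mul_prod_ite_lt (m : ℕ) (a b : R) :
    ∑ σ : Equiv.Perm (Fin (m + 1)), (-1 : R) ^ cyc σ * ∏ i, (if i < σ i then a else b) =
      -((a - b) ^ m * b) := by
  have hdet := Matrix.det_of_ite_lt m a b
  rw [Matrix.det_apply'] at hdet
  simp only [Matrix.of_apply] at hdet
  simp_rw [neg_one_pow_cyc, mul_assoc, ← mul_sum, hdet]
  rw [show a - b = -1 * (b - a) by ring, mul_pow]
  ring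

end Determinant

namespace ZMod

theorem sum_erase_zero_val {M : Type*} [AddCommMonoid M] (n : ℕ) [NeZero n] (f : ℕ → M) :
    ∑ x ∈ univ.erase (0 : ZMod n), f x.val = ∑ t ∈ Ico 1 n, f t := by
  refine sum_nbij' ZMod.val (fun t => (t : ZMod n)) (fun x hx => ?_) (fun t ht => ?_)
    (fun x _ => ZMod.natCast_zmod_val x) (fun t ht => ?_) (fun _ _ => rfl)
  · simp only [mem_erase, ne_eq, ← ZMod.val_eq_zero] at hx
    simp only [mem_Ico]
    exact ⟨Nat.one_le_iff_ne_zero.mpr hx.1, ZMod.val_lt x⟩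
  · simp only [mem_Ico] at ht
    simp only [mem_erase, mem_univ, and_true, ne_eq]
    rw [← ZMod.val_eq_zero, ZMod.val_natCast_of_lt ht.2]
    omega
  · exact ZMod.val_natCast_of_lt (mem_Ico.mp ht).2

end ZMod

section Colors

variable {k : ℕ} (r : Fin k → ℕ)

def colorWeight (z : Color k r) : ℕ :=
  ∑ p, (z p).val * (∏ t ∈ Iio p, if (z t).val = 0 then 1 else 0) * ∏ q ∈ univ.erase p, r q

def firstNonzero (z : Color k r) : Option (Fin k) :=
  if h : ∃ j, z j ≠ 0 then some (Fin.find (fun j => z j ≠ 0) h) else none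

variable {r}

theorem firstNonzero_eq_some_iff {z : Color k r} {m : Fin k} :
    firstNonzero r z = some m ↔ z m ≠ 0 ∧ ∀ j < m, z j = 0 := by
  unfold firstNonzero
  split_ifs with h
  · simp [Fin.find_eq_iff]
  · push Not at h
    simp [h]

theorem firstNonzero_eq_none_iff {z : Color k r} : firstNonzero r z = none ↔ z = 0 := by
  unfold firstNonzero
  split_ifs with h
  · simpa [funext_iff] using h
  · push Not at h
    simpa [funext_iff] using h

@[simp]
theorem colorWeight_zero : colorWeight r 0 = 0 := by
  simp [colorWeight]

theorem colorWeight_of_firstNonzero_eq_some {z : Color k r} {m : Fin k}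
    (h : firstNonzero r z = some m) :
    colorWeight r z = (z m).val * ∏ q ∈ univ.erase m, r q := by
  obtain ⟨hm, hlt⟩ := firstNonzero_eq_some_iff.mp h
  rw [colorWeight, sum_eq_single m]
  · rw [prod_eq_one fun t ht => by simp [hlt t (mem_Iio.mp ht)], mul_one]
  · intro p _ hp
    rcases lt_or_gt_of_ne hp with hpm | hmp
    · simp [hlt p hpm]
    · rw [prod_eq_zero (mem_Iio.mpr hmp) (by simp [hm]), mul_zero, zero_mul]
  · simp

variable [∀ j, NeZero (r j)]

theorem filter_firstNonzero_eq_some (m : Fin k) :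
    ({z | firstNonzero r z = some m} : Finset (Color k r)) =
      Fintype.piFinset fun j => if j < m then {0} else if j = m then univ.erase 0 else univ := by
  ext z
  simp only [mem_filter, mem_univ, true_and, firstNonzero_eq_some_iff, Fintype.mem_piFinset]
  constructor
  · rintro ⟨hm, hlt⟩ j
    split_ifs with hj hj'
    · simp [hlt j hj]
    · subst hj'
      simpa using hm
    · simp
  · intro h
    refine ⟨by simpa using h m, fun j hj => by simpa [hj] using h j⟩

theorem sum_X_pow_colorWeight_of_firstNonzero_eq_some (m : Fin k) :
    ∑ z with firstNonzero r z = some m, (X : ℚ[X]) ^ colorWeight r z =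
      ((∏ j ∈ Ioi m, r j : ℕ) : ℚ[X]) *
        ∑ t ∈ Ico 1 (r m), X ^ (t * ∏ q ∈ univ.erase m, r q) := by
  set R := ∏ q ∈ univ.erase m, r q
  have hterm : ∀ z ∈ ({z | firstNonzero r z = some m} : Finset (Color k r)),
      (X : ℚ[X]) ^ colorWeight r z = ∏ j, if j = m then X ^ ((z j).val * R) else 1 := by
    intro z hz
    rw [colorWeight_of_firstNonzero_eq_some (mem_filter.mp hz).2, prod_ite_eq']
    simp [R]
  rw [sum_congr rfl hterm, filter_firstNonzero_eq_some,
    ← prod_univ_sum _ fun j (x : ZMod (r j)) => if j = m then (X : ℚ[X]) ^ (x.val * R) else 1]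
  have hfactor : ∀ j : Fin k,
      ∑ x ∈ (if j < m then {0} else if j = m then univ.erase 0 else univ),
        (if j = m then (X : ℚ[X]) ^ ((x : ZMod (r j)).val * R) else 1) =
      (if j = m then ∑ t ∈ Ico 1 (r m), X ^ (t * R) else 1) * if m < j then (r j : ℚ[X]) else 1 := by
    intro j
    rcases lt_trichotomy j m with hj | rfl | hj
    · simp [hj, hj.ne, hj.not_gt]
    · simpa using ZMod.sum_erase_zero_val (r j) fun t => (X : ℚ[X]) ^ (t * R)
    · simp [hj, hj.ne', hj.not_gt]
  rw [prod_congr rfl fun j _ => hfactor j, prod_mul_distrib, prod_ite_eq', ← prod_filter,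
    filter_lt_eq_Ioi, Nat.cast_prod]
  simp [mul_comm]

theorem sum_X_pow_colorWeight : ∑ z : Color k r, (X : ℚ[X]) ^ colorWeight r z = 1 + Kpoly k r := by
  rw [← sum_fiberwise univ (firstNonzero r), Fintype.sum_option, Kpoly]
  simp only [sum_X_pow_colorWeight_of_firstNonzero_eq_some, firstNonzero_eq_none_iff,
    filter_eq', mem_univ, if_true, sum_singleton, colorWeight_zero, pow_zero]

theorem sum_ite_mul_X_pow_colorWeight (c : ℚ[X]) :
    ∑ z : Color k r, (if z = 0 then c else 1) * X ^ colorWeight r z = c + Kpoly k r := by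
  have h := sum_X_pow_colorWeight (r := r)
  rw [← add_sum_erase _ _ (mem_univ 0)] at h ⊢
  rw [sum_congr rfl fun z hz => by rw [if_neg (ne_of_mem_erase hz), one_mul]]
  simp only [if_true, colorWeight_zero, pow_zero, mul_one] at h ⊢
  linear_combination h

end Colors

section GeneratingFunction

variable {k : ℕ} (r : Fin k → ℕ)

theorem csum_eq_sum_colorWeight {n : ℕ} (Z : Fin n → Color k r) :
    csum r Z = ∑ i, colorWeight r (Z i) := by
  simp only [csum, csump, colorWeight, sum_mul]
  exact sum_comm

theorem X_pow_exc {n : ℕ} (Z : Fin n → Color k r) (σ : Equiv.Perm (Fin n)) :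
    (X : ℚ[X]) ^ exc r (Z, σ) = ∏ i,
      (if Z i = 0 then (if i < σ i then X ^ totR k r else 1) else 1) * X ^ colorWeight r (Z i) := by
  have hzero : ∀ z : Color k r, (∀ j, (z j).val = 0) ↔ z = 0 := by
    simp [funext_iff, ZMod.val_eq_zero]
  rw [prod_mul_distrib, prod_pow_eq_pow_sum, ← csum_eq_sum_colorWeight, exc, excA, pow_add,
    pow_mul, ← prod_const, prod_filter]
  simp only [hzero, ite_and]

variable [∀ j, NeZero (r j)]

theorem sum_X_pow_exc {n : ℕ} (σ : Equiv.Perm (Fin n)) :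
    ∑ Z : Fin n → Color k r, (X : ℚ[X]) ^ exc r (Z, σ) =
      ∏ i, if i < σ i then X ^ totR k r + Kpoly k r else 1 + Kpoly k r := by
  simp_rw [X_pow_exc]
  rw [← Fintype.prod_sum fun i (z : Color k r) =>
    (if z = 0 then (if i < σ i then X ^ totR k r else 1) else 1) * (X : ℚ[X]) ^ colorWeight r z]
  simp_rw [sum_ite_mul_X_pow_colorWeight, ite_add]

theorem Pgen_eq_sum_perm (n : ℕ) :
    Pgen k r n = ∑ σ : Equiv.Perm (Fin n), (-1) ^ cyc σ *
      ∏ i, if i < σ i then X ^ totR k r + Kpoly k r else 1 + Kpoly k r := by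
  simp_rw [Pgen, Fintype.sum_prod_type_right, ← mul_sum, sum_X_pow_exc]

end GeneratingFunction

theorem Pgen_closed_form_general (k : ℕ) (r : Fin k → ℕ) [∀ j, NeZero (r j)]
    (n : ℕ) (hn : 1 ≤ n) :
    Pgen k r n = -((1 + Kpoly k r) * ((X : Polynomial ℚ) ^ totR k r - 1) ^ (n - 1)) := by
  obtain ⟨m, rfl⟩ : ∃ m, n = m + 1 := ⟨n - 1, by omega⟩
  rw [Pgen_eq_sum_perm, sum_neg_one_pow_cyc_mul_prod_ite_lt, Nat.add_sub_cancel]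
  ring

theorem Pgen_closed_form (k : ℕ) (r : Fin k → ℕ) [∀ j, NeZero (r j)]
    (hk : 1 ≤ k) (hr : ∀ j, 1 ≤ r j) (n : ℕ) (hn : 1 ≤ n) :
    Pgen k r n = -((1 + Kpoly k r) * ((X : Polynomial ℚ) ^ totR k r - 1) ^ (n - 1)) :=
  Pgen_closed_form_general k r n hn
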